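/- arXiv:1612.06793 — 2 statements merged into one kernel-verified Lean document; each statement's English description precedes it below -/
import Mathlib

section
/- The jet map is well-defined: for positive integers m, n, d, if (f_1,…,f_m) is an m-tuple of monic degree-d complex polynomials with no common root of multiplicity ≥ n, then the mn polynomials f_k, f_k + f_k', f_k + f_k'', …, f_k + f_k^{(n−1)} (for k = 1,…,m) are all monic of degree d and have no common complex root. -/
/-! Derivatives of positive order lower the degree, so each `f + f⁽ⁱ⁾` is monic of the same
degree as `f`. A common root `α` of `f, f + f', …, f + f⁽ⁿ⁻¹⁾` is a root of `f` and hence of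
`f', …, f⁽ⁿ⁻¹⁾`; in characteristic zero this forces `(X - α) ^ n ∣ f`. -/

open Polynomial

namespace Polynomial

section Semiring

variable {R : Type*} [Semiring R]

theorem degree_iterate_derivative_le (p : R[X]) (i : ℕ) :
    (derivative^[i] p).degree ≤ p.degree := by
  induction i with
  | zero => rfl
  | succ i ih => rw [Function.iterate_succ_apply']; exact degree_derivative_le.trans ih

theorem degree_iterate_derivative_lt {p : R[X]} (hp : p ≠ 0) {i : ℕ} (hi : i ≠ 0) :
    (derivative^[i] p).degree < p.degree := by
  obtain ⟨j, rfl⟩ := Nat.exists_eq_succ_of_ne_zero hi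
  rw [Function.iterate_succ_apply]
  exact (degree_iterate_derivative_le _ j).trans_lt (degree_derivative_lt hp)

noncomputable def jetComponent (p : R[X]) (i : ℕ) : R[X] :=
  if i = 0 then p else p + derivative^[i] p

@[simp]
theorem zero_jetComponent (i : ℕ) : (0 : R[X]).jetComponent i = 0 := by
  simp [jetComponent, iterate_map_zero]

theorem jetComponent_of_ne_zero (p : R[X]) {i : ℕ} (hi : i ≠ 0) :
    p.jetComponent i = p + derivative^[i] p :=
  if_neg hi

theorem Monic.jetComponent {p : R[X]} (hp : p.Monic) (i : ℕ) : (p.jetComponent i).Monic := by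
  rcases eq_or_ne p 0 with rfl | hp0
  · rwa [zero_jetComponent]
  rcases eq_or_ne i 0 with rfl | hi
  · exact hp
  · rw [jetComponent_of_ne_zero p hi]
    exact hp.add_of_left (degree_iterate_derivative_lt hp0 hi)

theorem natDegree_jetComponent (p : R[X]) (i : ℕ) : (p.jetComponent i).natDegree = p.natDegree := by
  rcases eq_or_ne p 0 with rfl | hp
  · rw [zero_jetComponent]
  rcases eq_or_ne i 0 with rfl | hi
  · rfl
  · rw [jetComponent_of_ne_zero p hi]
    exact natDegree_add_eq_left_of_degree_lt (degree_iterate_derivative_lt hp hi)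

theorem isRoot_jetComponent_iff {p : R[X]} {a : R} (hp : p.IsRoot a) (i : ℕ) :
    (p.jetComponent i).IsRoot a ↔ (derivative^[i] p).IsRoot a := by
  rcases eq_or_ne i 0 with rfl | hi
  · rfl
  · rw [jetComponent_of_ne_zero p hi, IsRoot, eval_add, hp.eq_zero, zero_add, IsRoot]

theorem forall_isRoot_jetComponent_iff {p : R[X]} {a : R} {n : ℕ} :
    (∀ i < n, (p.jetComponent i).IsRoot a) ↔ ∀ i < n, (derivative^[i] p).IsRoot a :=
  ⟨fun h i hi ↦ (isRoot_jetComponent_iff (h 0 (Nat.zero_lt_of_lt hi)) i).mp (h i hi),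
    fun h i hi ↦ (isRoot_jetComponent_iff (h 0 (Nat.zero_lt_of_lt hi)) i).mpr (h i hi)⟩

end Semiring

theorem pow_dvd_of_forall_isRoot_iterate_derivative {R : Type*} [CommRing R] [NoZeroDivisors R]
    [CharZero R] {p : R[X]} {a : R} {n : ℕ} (h : ∀ i < n, (derivative^[i] p).IsRoot a) :
    (X - C a) ^ n ∣ p := by
  rcases eq_or_ne p 0 with rfl | hp
  · exact dvd_zero _
  cases n with
  | zero => exact one_dvd _
  | succ n =>
    exact (le_rootMultiplicity_iff hp).mp <|
      lt_rootMultiplicity_of_isRoot_iterate_derivative hp fun i hi ↦ h i (Nat.lt_succ_of_le hi)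

end Polynomial

theorem stmt_6_general (m n d : ℕ)
    (f : Fin m → Polynomial ℂ)
    (hmonic : ∀ k, (f k).Monic) (hdeg : ∀ k, (f k).natDegree = d)
    (hpoly : ¬ ∃ α : ℂ, ∀ k, (X - C α) ^ n ∣ f k)
    (g : Fin m → ℕ → Polynomial ℂ)
    (hg : ∀ k i, g k i = if i = 0 then f k else f k + Polynomial.derivative^[i] (f k)) :
    (∀ k, ∀ i < n, (g k i).Monic ∧ (g k i).natDegree = d) ∧
      ¬ ∃ α : ℂ, ∀ k, ∀ i < n, (g k i).eval α = 0 := by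
  obtain rfl : g = fun k ↦ (f k).jetComponent := funext₂ hg
  refine ⟨fun k i _ ↦ ⟨(hmonic k).jetComponent i, (natDegree_jetComponent _ _).trans (hdeg k)⟩, ?_⟩
  rintro ⟨α, hα⟩
  exact hpoly ⟨α, fun k ↦ pow_dvd_of_forall_isRoot_iterate_derivative
    (forall_isRoot_jetComponent_iff.mp (hα k))⟩

/-- Well-definedness of the jet map: if `(f_1,…,f_m)` are monic of degree `d`
with no common root of multiplicity ≥ n, then the `mn` polynomials
`f_k, f_k + f_k', …, f_k + f_k^{(n-1)}` are all monic of degree `d` and have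
no common complex root. -/
theorem stmt_6 (m n d : ℕ) (hm : 1 ≤ m) (hn : 1 ≤ n) (hd : 1 ≤ d)
    (f : Fin m → Polynomial ℂ)
    (hmonic : ∀ k, (f k).Monic) (hdeg : ∀ k, (f k).natDegree = d)
    (hpoly : ¬ ∃ α : ℂ, ∀ k, (X - C α) ^ n ∣ f k)
    (g : Fin m → ℕ → Polynomial ℂ)
    (hg : ∀ k i, g k i = if i = 0 then f k else f k + Polynomial.derivative^[i] (f k)) :
    (∀ k, ∀ i < n, (g k i).Monic ∧ (g k i).natDegree = d) ∧
      ¬ ∃ α : ℂ, ∀ k, ∀ i < n, (g k i).eval α = 0 :=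
  stmt_6_general m n d f hmonic hdeg hpoly g hg
end

section
/- The discriminant Σ^{d,m}_n has complex codimension mn − 1 in ℂ^{dm} when d ≥ n: the image of the map ℂ × ℂ^{m(d−n)} → ℂ^{dm} sending (α, (q_1,…,q_m)) ↦ ((z−α)^n q̂_1, …, (z−α)^n q̂_m) (where q̂_k is the monic degree-(d−n) polynomial with coefficient vector q_k, identified with its coefficient vector in ℂ^{dm}) is exactly Σ^{d,m}_n, so Σ^{d,m}_n is the image of an algebraic map from an affine space of dimension m(d−n) + 1 = dm − (mn − 1). -/
open Polynomial

theorem Polynomial.Monic.natDegree_of_mul_monic_left {R : Type*} [Semiring R] {p q : R[X]}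
    (hp : p.Monic) (hpq : (p * q).Monic) :
    q.natDegree = (p * q).natDegree - p.natDegree := by
  rw [hp.natDegree_mul (hp.of_mul_monic_left hpq)]
  omega

theorem stmt_19_general (m n d : ℕ)
    (f : Fin m → Polynomial ℂ)
    (hmonic : ∀ k, (f k).Monic) (hdeg : ∀ k, (f k).natDegree = d) :
    (∃ α : ℂ, ∀ k, (X - C α) ^ n ∣ f k) ↔
      ∃ (α : ℂ) (q : Fin m → Polynomial ℂ),
        (∀ k, (q k).Monic ∧ (q k).natDegree = d - n) ∧
        ∀ k, f k = (X - C α) ^ n * q k := by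
  constructor
  · rintro ⟨α, hdvd⟩
    choose q hq using hdvd
    have hp : ((X - C α) ^ n).Monic := (monic_X_sub_C α).pow n
    refine ⟨α, q, fun k => ?_, hq⟩
    have hpq : ((X - C α) ^ n * q k).Monic := hq k ▸ hmonic k
    refine ⟨hp.of_mul_monic_left hpq, ?_⟩
    rw [hp.natDegree_of_mul_monic_left hpq, ← hq k, hdeg k, natDegree_pow, natDegree_X_sub_C,
      mul_one]
  · rintro ⟨α, q, -, hq⟩
    exact ⟨α, fun k => ⟨q k, hq k⟩⟩

/-- For d ≥ n, the discriminant is the image of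
`(α, (q_1,…,q_m)) ↦ ((z-α)^n q_1, …, (z-α)^n q_m)`: a tuple of monic degree-d
polynomials has a common root of multiplicity ≥ n iff each `f_k = (z-α)^n q_k` with
`q_k` monic of degree `d - n`, for some common `α`. -/
theorem stmt_19 (m n d : ℕ) (hm : 1 ≤ m) (hn : 1 ≤ n) (hdn : n ≤ d)
    (f : Fin m → Polynomial ℂ)
    (hmonic : ∀ k, (f k).Monic) (hdeg : ∀ k, (f k).natDegree = d) :
    (∃ α : ℂ, ∀ k, (X - C α) ^ n ∣ f k) ↔
      ∃ (α : ℂ) (q : Fin m → Polynomial ℂ),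
        (∀ k, (q k).Monic ∧ (q k).natDegree = d - n) ∧
        ∀ k, f k = (X - C α) ^ n * q k :=
  stmt_19_general m n d f hmonic hdeg
end
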